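/- Define (G₂ p)(X, S) = ∑_{i,j=1}^{n_s} ∑_{α=1}^{n_a} f_{ij}^{(α)}(X, S + i e_α − j e_α) p(X, S + i e_α − j e_α) with the second-order rate functions f_{ij}^{(α)}(X, S) = δ_i(s_α) ∑_{β ≠ α} δ_j(s_β) c_{ij} d_r(x_α, x_β), where S + i e_α − j e_α denotes coordinatewise integer arithmetic on the status vector and functions of (X, S) are extended by 0 when the status vector leaves S^{n_a}. Then for all M, N ∈ M_{n_a}: ⟨Φ_M, G₂ Φ_N⟩ = ∑_{l=1}^{m} c_{ij} b_{kl} N_i^{(k)} N_j^{(l)} ⟨Φ_N, Φ_N⟩ if M = N + E_j^{(k)} − E_i^{(k)} for some statuses i ≠ j and subset index k, and ⟨Φ_M, G₂ Φ_N⟩ = 0 otherwise. -/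

import Mathlib

open MeasureTheory Finset Function

namespace ABMFormal

abbrev E (d : ℕ) : Type := EuclideanSpace ℝ (Fin d)
abbrev FS (d n_s n_a : ℕ) : Type := (Fin n_a → E d) → (Fin n_a → Fin n_s) → ℝ

noncomputable def occ {d m n_s n_a : ℕ} (A : Fin m → Set (E d)) (X : Fin n_a → E d)
    (S : Fin n_a → Fin n_s) (i : Fin n_s) (k : Fin m) : ℕ :=
  Set.ncard {α : Fin n_a | X α ∈ A k ∧ S α = i}

noncomputable def Phi {d m n_s n_a : ℕ} (A : Fin m → Set (E d)) (N : Fin n_s → Fin m → ℤ)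
    (X : Fin n_a → E d) (S : Fin n_a → Fin n_s) : ℝ :=
  if ∀ i k, ((occ A X S i k : ℕ) : ℤ) = N i k then 1 else 0

noncomputable def Mset (n_s m n_a : ℕ) : Finset (Fin n_s → Fin m → ℤ) :=
  ((Finset.univ : Finset (Fin n_s → Fin m → Fin (n_a + 1))).image
      fun f i k => ((f i k : ℕ) : ℤ)).filter
    fun N => (∑ i, ∑ k, N i k) = (n_a : ℤ)

def posSet {d : ℕ} (Xdom : Set (E d)) (n_a : ℕ) : Set (Fin n_a → E d) :=
  Set.univ.pi fun _ => Xdom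

noncomputable def ip {d n_s n_a : ℕ} (Xdom : Set (E d)) (f g : FS d n_s n_a) : ℝ :=
  (((volume Xdom).toReal * (n_s : ℝ)) ^ n_a)⁻¹ *
    ∑ S : Fin n_a → Fin n_s, ∫ X in posSet Xdom n_a, f X S * g X S

def one (d n_s n_a : ℕ) : FS d n_s n_a := fun _ _ => 1

def Emat {n_s m : ℕ} (i : Fin n_s) (k : Fin m) : Fin n_s → Fin m → ℤ :=
  fun i' k' => if i' = i ∧ k' = k then 1 else 0

def deltaS {n_s : ℕ} (i s : Fin n_s) : ℝ := if s = i then 1 else 0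

noncomputable def deltaA {d : ℕ} (A : Set (E d)) (x : E d) : ℝ :=
  A.indicator (fun _ => (1 : ℝ)) x

noncomputable def dr {d : ℕ} (r : ℝ) (x y : E d) : ℝ := if dist x y ≤ r then 1 else 0

/-- Transition rates `λ_i^{(kl)} = (∫_{A_l} ∫_{A_k} ℓ_i(x,y) dy dx) / μ(A_k)`. -/
noncomputable def lam {d m n_s : ℕ} (A : Fin m → Set (E d)) (K : Fin n_s → E d → E d → ℝ)
    (i : Fin n_s) (k l : Fin m) : ℝ :=
  (∫ x in A l, ∫ y in A k, K i x y) / (volume (A k)).toReal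

/-- The movement generator `(L p)(X, S) = ∑_α ∫_X ℓ_{s_α}(x_α, y) p(X^{α→y}, S) dy`. -/
noncomputable def Lop {d n_s n_a : ℕ} (Xdom : Set (E d)) (K : Fin n_s → E d → E d → ℝ)
    (p : FS d n_s n_a) : FS d n_s n_a :=
  fun X S => ∑ α, ∫ y in Xdom, K (S α) (X α) y * p (Function.update X α y) S

/-- `γ_{ij}^{(k)} = (∫_{A_k} γ_{ij}(x) dx) / μ(A_k)`. -/
noncomputable def gammaK {d m n_s : ℕ} (A : Fin m → Set (E d)) (γ : Fin n_s → Fin n_s → E d → ℝ)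
    (i j : Fin n_s) (k : Fin m) : ℝ :=
  (∫ x in A k, γ i j x) / (volume (A k)).toReal

/-- First-order adoption rate function `f_{ij}^{(α)}(X,S) = δ_i(s_α) γ_{ij}(x_α)`. -/
noncomputable def fFirst {d n_s n_a : ℕ} (γ : Fin n_s → Fin n_s → E d → ℝ) (i j : Fin n_s)
    (α : Fin n_a) (X : Fin n_a → E d) (S : Fin n_a → Fin n_s) : ℝ :=
  deltaS i (S α) * γ i j (X α)

/-- Outflow part `G₁ p = (∑_{i,j,α} f_{ij}^{(α)}) p` of the first-order adoption generator. -/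
noncomputable def G1First {d n_s n_a : ℕ} (γ : Fin n_s → Fin n_s → E d → ℝ)
    (p : FS d n_s n_a) : FS d n_s n_a :=
  fun X S => (∑ i, ∑ j, ∑ α, fFirst γ i j α X S) * p X S

/-- Inflow part `G₂ p (X,S) = ∑_{i,j,α} f_{ij}^{(α)}(X, S + i e_α − j e_α) p(X, S + i e_α − j e_α)`
of the first-order adoption generator.  Since in coordinatewise integer arithmetic
`δ_i(s_α + i − j) = δ_j(s_α)`, and then `S + i e_α − j e_α = Function.update S α i` lies in
`S^{n_a}`, while all other summands vanish by the extension-by-zero convention, the term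
equals `∑_{i,j,α} δ_j(s_α) γ_{ij}(x_α) p(X, update S α i)`. -/
noncomputable def G2First {d n_s n_a : ℕ} (γ : Fin n_s → Fin n_s → E d → ℝ)
    (p : FS d n_s n_a) : FS d n_s n_a :=
  fun X S => ∑ i, ∑ j, ∑ α, deltaS j (S α) * γ i j (X α) * p X (Function.update S α i)

/-- The first-order adoption generator `G = −G₁ + G₂`. -/
noncomputable def GopFirst {d n_s n_a : ℕ} (γ : Fin n_s → Fin n_s → E d → ℝ)
    (p : FS d n_s n_a) : FS d n_s n_a :=
  fun X S => -(G1First γ p X S) + G2First γ p X S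

/-- Second-order adoption rate function
`f_{ij}^{(α)}(X,S) = δ_i(s_α) ∑_{β ≠ α} δ_j(s_β) c_{ij} d_r(x_α, x_β)`. -/
noncomputable def fSecond {d n_s n_a : ℕ} (c : Fin n_s → Fin n_s → ℝ) (r : ℝ)
    (i j : Fin n_s) (α : Fin n_a) (X : Fin n_a → E d) (S : Fin n_a → Fin n_s) : ℝ :=
  deltaS i (S α) * ∑ β ∈ Finset.univ.erase α, deltaS j (S β) * (c i j * dr r (X α) (X β))

/-- Outflow part `G₁ p = (∑_{i,j,α} f_{ij}^{(α)}) p` of the second-order adoption generator. -/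
noncomputable def G1Second {d n_s n_a : ℕ} (c : Fin n_s → Fin n_s → ℝ) (r : ℝ)
    (p : FS d n_s n_a) : FS d n_s n_a :=
  fun X S => (∑ i, ∑ j, ∑ α, fSecond c r i j α X S) * p X S

/-- Inflow part of the second-order adoption generator, the term
`∑_{i,j,α} f_{ij}^{(α)}(X, S + i e_α − j e_α) p(X, S + i e_α − j e_α)`; as in the
first-order case the only non-vanishing summands are those with `s_α = j`, giving
`∑_{i,j,α} δ_j(s_α) (∑_{β ≠ α} δ_j(s_β) c_{ij} d_r(x_α,x_β)) p(X, update S α i)`. -/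
noncomputable def G2Second {d n_s n_a : ℕ} (c : Fin n_s → Fin n_s → ℝ) (r : ℝ)
    (p : FS d n_s n_a) : FS d n_s n_a :=
  fun X S => ∑ i, ∑ j, ∑ α, deltaS j (S α) *
    (∑ β ∈ Finset.univ.erase α, deltaS j (S β) * (c i j * dr r (X α) (X β))) *
    p X (Function.update S α i)

/-- The second-order adoption generator `G = −G₁ + G₂`. -/
noncomputable def GopSecond {d n_s n_a : ℕ} (c : Fin n_s → Fin n_s → ℝ) (r : ℝ)
    (p : FS d n_s n_a) : FS d n_s n_a :=
  fun X S => -(G1Second c r p X S) + G2Second c r p X S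

/-- `b_{kl} = (∫_{A_k} ∫_{A_l} d_r(x₁,x₂) dx₂ dx₁)/(μ(A_k) μ(A_l))`. -/
noncomputable def bOf {d m : ℕ} (A : Fin m → Set (E d)) (r : ℝ) (k l : Fin m) : ℝ :=
  (∫ x in A k, ∫ y in A l, dr r x y) / ((volume (A k)).toReal * (volume (A l)).toReal)

/-- The normalized ansatz functions `Φ̂_N = Φ_N / ⟨Φ_N, 𝟙⟩`. -/
noncomputable def Phihat {d m n_s n_a : ℕ} (Xdom : Set (E d)) (A : Fin m → Set (E d))
    (N : Fin n_s → Fin m → ℤ) : FS d n_s n_a :=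
  fun X S => Phi A N X S / ip Xdom (Phi (n_a := n_a) A N) (one d n_s n_a)

/-- The Galerkin projection `Q v = ∑_{N ∈ M_{n_a}} (⟨Φ_N, v⟩/⟨Φ_N, 𝟙⟩) Φ_N`. -/
noncomputable def Qproj {d m n_s n_a : ℕ} (Xdom : Set (E d)) (A : Fin m → Set (E d))
    (v : FS d n_s n_a) : FS d n_s n_a :=
  fun X S => ∑ N ∈ Mset n_s m n_a,
    (ip Xdom (Phi (n_a := n_a) A N) v / ip Xdom (Phi (n_a := n_a) A N) (one d n_s n_a)) *
      Phi A N X S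

/-- The matrix representation `Ĥ_{NM} = ⟨Φ_M, H Φ_N⟩ / ⟨Φ_N, 𝟙⟩` of a projected operator. -/
noncomputable def Hhat {d m n_s n_a : ℕ} (Xdom : Set (E d)) (A : Fin m → Set (E d))
    (H : FS d n_s n_a →ₗ[ℝ] FS d n_s n_a) (N M : Fin n_s → Fin m → ℤ) : ℝ :=
  ip Xdom (Phi (n_a := n_a) A M) (H (Phi A N)) / ip Xdom (Phi (n_a := n_a) A N) (one d n_s n_a)

/-!
On each cell `∏_α A_{κ α}` of `Xdom ^ n_a` the ansatz functions are constant, determined by the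
occupation matrix of the discrete configuration `(S, κ)`, and the integral of
`d_r(x_α, x_β)` over the cell is `b_{κ α, κ β}` times the cell volume; so `⟨Φ_M, G₂ Φ_N⟩`
becomes a finite sum over configurations. Reindexing the status sum by `S ↦ S[α ↦ i]` moves the
status change from `Φ_N` onto `Φ_M`: if `(S, κ)` has occupation `N` and `s_α = i`, then
`Φ_M(S[α ↦ j]) = 1` exactly when `M = N + E_j^{(κ α)} − E_i^{(κ α)}`. Since `c_{ii} = 0` and
`E_j^{(k)} − E_i^{(k)}` with `i ≠ j` determines `(i, j, k)`, every term vanishes unless `M` is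
such a transition of `N`, and then only that transition survives. It contributes `N_i^{(k)}`
choices of `α` and `∑_l N_j^{(l)} b_{kl}` from the choices of `β`, and the remaining sum over
configurations is `⟨Φ_N, Φ_N⟩`.
-/

theorem pi_map_eval_pair {ι α : Type*} [Fintype ι] [DecidableEq ι] [MeasurableSpace α]
    (μ : ι → Measure α) [∀ i, IsFiniteMeasure (μ i)] {a b : ι} (hab : a ≠ b) :
    (Measure.pi μ).map (fun x => (x a, x b)) =
      (∏ j ∈ (univ.erase a).erase b, measureUnivNNReal (μ j)) • (μ a).prod (μ b) := by
  rw [← Measure.prod_smul_left]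
  refine (Measure.prod_eq fun s t hs ht => ?_).symm
  have hpre : (fun x : ι → α => (x a, x b)) ⁻¹' s ×ˢ t =
      Set.univ.pi (update (update (fun _ => Set.univ) a s) b t) := by
    ext x
    simp only [Set.mem_preimage, Set.mem_prod, Set.mem_pi, Set.mem_univ, true_implies,
      update_apply]
    refine ⟨fun ⟨hxa, hxb⟩ i => ?_, fun h => ⟨by simpa [hab] using h a, by simpa using h b⟩⟩
    split_ifs with hb ha <;> simp_all
  rw [Measure.map_apply (by fun_prop) (hs.prod ht), hpre, Measure.pi_pi,
    ← mul_prod_erase univ _ (mem_univ a),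
    ← mul_prod_erase (univ.erase a) _ (mem_erase.2 ⟨hab.symm, mem_univ b⟩)]
  simp only [update_self, update_of_ne hab, Measure.coe_nnreal_smul_apply,
    ENNReal.ofNNReal_finsetProd, coe_measureUnivNNReal]
  rw [prod_congr rfl fun j hj => by
    rw [update_of_ne (ne_of_mem_erase hj), update_of_ne (ne_of_mem_erase (mem_of_mem_erase hj))]]
  ring

theorem integral_comp_eval_pair {ι α : Type*} [Fintype ι] [DecidableEq ι] [MeasurableSpace α]
    (μ : ι → Measure α) [∀ i, IsFiniteMeasure (μ i)] {a b : ι} (hab : a ≠ b) {f : α × α → ℝ}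
    (hf : AEStronglyMeasurable f ((μ a).prod (μ b))) :
    ∫ x, f (x a, x b) ∂(Measure.pi μ) =
      (∏ j ∈ (univ.erase a).erase b, (μ j).real Set.univ) * ∫ z, f z ∂(μ a).prod (μ b) := by
  have hmap := pi_map_eval_pair μ hab
  rw [← integral_map (by fun_prop) (hmap ▸ hf.smul_measure _), hmap,
    integral_smul_nnreal_measure, NNReal.smul_def, NNReal.coe_prod, smul_eq_mul]
  rfl

theorem sum_ite_apply_eq_sum_ite_update {ι σ : Type*} [Fintype ι] [DecidableEq ι] [Fintype σ]
    [DecidableEq σ] (α : ι) (i j : σ) (F : (ι → σ) → (ι → σ) → ℝ) :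
    ∑ S, (if S α = j then F S (update S α i) else 0) =
      ∑ S, if S α = i then F (update S α j) S else 0 := by
  have hfix : ∀ (S : ι → σ) (a : σ), S α = a → update S α a = S := fun S _ h =>
    h ▸ update_eq_self α S
  rw [← sum_filter, ← sum_filter]
  refine sum_nbij' (update · α i) (update · α j) ?_ ?_ ?_ ?_ ?_ <;>
    simp +contextual [hfix]

section Cells

variable {d m n_a : ℕ}

def cell (A : Fin m → Set (E d)) (κ : Fin n_a → Fin m) : Set (Fin n_a → E d) :=
  Set.univ.pi fun α => A (κ α)

noncomputable def cellVolume (A : Fin m → Set (E d)) (κ : Fin n_a → Fin m) : ℝ :=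
  ∏ α, (volume (A (κ α))).toReal

variable {A : Fin m → Set (E d)}

theorem measurableSet_cell (hAmeas : ∀ k, MeasurableSet (A k)) (κ : Fin n_a → Fin m) :
    MeasurableSet (cell A κ) :=
  .univ_pi fun α => hAmeas (κ α)

theorem volume_cell_ne_top (hAfin : ∀ k, volume (A k) ≠ ⊤) (κ : Fin n_a → Fin m) :
    volume (cell A κ) ≠ ⊤ := by
  rw [cell, volume_pi_pi]
  exact ENNReal.prod_ne_top fun α _ => hAfin (κ α)

theorem measureReal_cell (κ : Fin n_a → Fin m) : volume.real (cell A κ) = cellVolume A κ := by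
  rw [measureReal_def, cell, volume_pi_pi, ENNReal.toReal_prod]
  rfl

theorem posSet_eq_iUnion_cell {Xdom : Set (E d)} (hAcover : (⋃ k, A k) = Xdom) :
    posSet Xdom n_a = ⋃ κ, cell A κ := by
  ext X
  simp [posSet, cell, Set.mem_pi, ← hAcover, Classical.skolem]

theorem pairwise_disjoint_cell (hAdisj : Pairwise (Disjoint on A)) :
    Pairwise (Disjoint on cell (n_a := n_a) A) := by
  intro κ κ' hne
  obtain ⟨α, hα⟩ := Function.ne_iff.mp hne
  exact Set.disjoint_left.2 fun X hX hX' =>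
    Set.disjoint_left.1 (hAdisj hα) (hX α trivial) (hX' α trivial)

theorem setIntegral_posSet_eq_sum_cell {Xdom : Set (E d)} (hAmeas : ∀ k, MeasurableSet (A k))
    (hAdisj : Pairwise (Disjoint on A)) (hAcover : (⋃ k, A k) = Xdom)
    {f : (Fin n_a → E d) → ℝ} (hf : ∀ κ, IntegrableOn f (cell A κ)) :
    ∫ X in posSet Xdom n_a, f X = ∑ κ, ∫ X in cell A κ, f X := by
  rw [posSet_eq_iUnion_cell hAcover]
  exact integral_iUnion_fintype (measurableSet_cell hAmeas) (pairwise_disjoint_cell hAdisj) hf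

theorem measurable_dr {α : Type*} [MeasurableSpace α] {f g : α → E d} (hf : Measurable f)
    (hg : Measurable g) (r : ℝ) : Measurable fun x => dr r (f x) (g x) :=
  Measurable.ite (measurableSet_le (hf.dist hg) measurable_const) measurable_const
    measurable_const

theorem norm_dr_le (r : ℝ) (x y : E d) : ‖dr r x y‖ ≤ 1 := by
  unfold dr
  split_ifs <;> simp

theorem integrable_cell_dr (hAfin : ∀ k, volume (A k) ≠ ⊤) (r : ℝ) (κ : Fin n_a → Fin m)
    (α β : Fin n_a) :
    Integrable (fun X : Fin n_a → E d => dr r (X α) (X β)) (volume.restrict (cell A κ)) := by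
  have := isFiniteMeasure_restrict.2 (volume_cell_ne_top hAfin κ)
  exact Integrable.of_bound
    (measurable_dr (measurable_pi_apply α) (measurable_pi_apply β) r).aestronglyMeasurable 1
    (.of_forall fun X => norm_dr_le r _ _)

-- If `A k` or `A l` is null, both sides vanish: `bOf` then divides by zero.
theorem integral_integral_dr_eq (hAfin : ∀ k, volume (A k) ≠ ⊤) (r : ℝ) (k l : Fin m) :
    ∫ x in A k, ∫ y in A l, dr r x y =
      bOf A r k l * ((volume (A k)).toReal * (volume (A l)).toReal) := by
  have hnull : ∀ k, (volume (A k)).toReal = 0 → volume.restrict (A k) = 0 := fun k h =>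
    Measure.restrict_eq_zero.2 (((ENNReal.toReal_eq_zero_iff _).1 h).resolve_right (hAfin k))
  rcases eq_or_ne ((volume (A k)).toReal * (volume (A l)).toReal) 0 with h | h
  · rw [h, mul_zero]
    rcases mul_eq_zero.1 h with h | h
    · rw [hnull k h, integral_zero_measure]
    · simp_rw [hnull l h, integral_zero_measure, integral_zero]
  · exact (div_mul_cancel₀ _ h).symm

theorem setIntegral_cell_dr (hAfin : ∀ k, volume (A k) ≠ ⊤) (r : ℝ) (κ : Fin n_a → Fin m)
    {α β : Fin n_a} (hαβ : α ≠ β) :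
    ∫ X in cell A κ, dr r (X α) (X β) = bOf A r (κ α) (κ β) * cellVolume A κ := by
  have : ∀ γ, IsFiniteMeasure (volume.restrict (A (κ γ))) := fun γ =>
    isFiniteMeasure_restrict.2 (hAfin _)
  have hmeas := measurable_dr measurable_fst measurable_snd r (d := d)
  rw [cell, volume_pi, Measure.restrict_pi_pi,
    integral_comp_eval_pair _ hαβ hmeas.aestronglyMeasurable,
    integral_prod _ (Integrable.of_bound hmeas.aestronglyMeasurable 1
      (.of_forall fun z => norm_dr_le r z.1 z.2)),
    integral_integral_dr_eq hAfin, cellVolume,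
    ← mul_prod_erase univ _ (mem_univ α),
    ← mul_prod_erase (univ.erase α) _ (mem_erase.2 ⟨hαβ.symm, mem_univ β⟩)]
  simp only [measureReal_def, Measure.restrict_apply_univ]
  ring

end Cells

section Configurations

variable {n_s m n_a : ℕ}

def cellOcc (S : Fin n_a → Fin n_s) (κ : Fin n_a → Fin m) : Fin n_s → Fin m → ℤ :=
  fun i k => #{α | κ α = k ∧ S α = i}

noncomputable def cellPhi (P : Fin n_s → Fin m → ℤ) (S : Fin n_a → Fin n_s)
    (κ : Fin n_a → Fin m) : ℝ :=
  if cellOcc S κ = P then 1 else 0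

theorem cellOcc_eq_add_sum_erase (S : Fin n_a → Fin n_s) (κ : Fin n_a → Fin m) (α : Fin n_a)
    (i : Fin n_s) (k : Fin m) :
    cellOcc S κ i k = (if κ α = k ∧ S α = i then 1 else 0) +
      ∑ β ∈ univ.erase α, if κ β = k ∧ S β = i then 1 else 0 := by
  rw [add_sum_erase univ (fun β => if κ β = k ∧ S β = i then (1 : ℤ) else 0) (mem_univ α),
    cellOcc, card_filter]
  push_cast
  rfl

theorem cellOcc_update (S : Fin n_a → Fin n_s) (κ : Fin n_a → Fin m) (α : Fin n_a)
    (i : Fin n_s) :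
    cellOcc (update S α i) κ = cellOcc S κ + Emat i (κ α) - Emat (S α) (κ α) := by
  ext i' k'
  have hrest : ∀ β ∈ univ.erase α, update S α i β = S β := fun β hβ =>
    update_of_ne (ne_of_mem_erase hβ) _ _
  rw [Pi.sub_apply, Pi.add_apply, Pi.sub_apply, Pi.add_apply, cellOcc_eq_add_sum_erase _ _ α,
    cellOcc_eq_add_sum_erase S _ α, sum_congr rfl fun β hβ => by rw [hrest β hβ]]
  simp only [update_self, Emat]
  split_ifs <;> grind

theorem cellPhi_update {M N : Fin n_s → Fin m → ℤ} {S : Fin n_a → Fin n_s}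
    {κ : Fin n_a → Fin m} (hN : cellOcc S κ = N) {α : Fin n_a} {i : Fin n_s} (hSα : S α = i)
    (j : Fin n_s) :
    cellPhi M (update S α j) κ = if M = N + Emat j (κ α) - Emat i (κ α) then 1 else 0 := by
  simp only [cellPhi, cellOcc_update, hN, hSα, eq_comm]

theorem eq_of_Emat_sub_Emat_eq {i j i' j' : Fin n_s} {k k' : Fin m} (hij : i ≠ j)
    (h : Emat j k - Emat i k = Emat j' k' - Emat i' k') : i = i' ∧ j = j' ∧ k = k' := by
  have hj := congrFun (congrFun h j) k
  have hi := congrFun (congrFun h i) k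
  simp only [Pi.sub_apply, Emat, hij, hij.symm, and_self, if_true] at hi hj
  split_ifs at hi hj <;> simp_all

theorem sum_ite_eq_cellOcc_mul (S : Fin n_a → Fin n_s) (κ : Fin n_a → Fin m) (i : Fin n_s)
    (k : Fin m) (x : ℝ) : ∑ α, (if κ α = k ∧ S α = i then x else 0) = cellOcc S κ i k * x := by
  rw [← sum_filter, sum_const, nsmul_eq_mul, cellOcc, Int.cast_natCast]

theorem sum_ite_eq_sum_cellOcc_mul (S : Fin n_a → Fin n_s) (κ : Fin n_a → Fin m) (i : Fin n_s)
    (f : Fin m → ℝ) : ∑ β, (if S β = i then f (κ β) else 0) = ∑ l, cellOcc S κ i l * f l := by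
  simp_rw [← sum_ite_eq_cellOcc_mul]
  rw [sum_comm]
  refine sum_congr rfl fun β _ => ?_
  split_ifs with h <;> simp [h, and_comm]

/-- The rate of `fSecond` with `d_r(x_α, x_β)` replaced by its cell average `b (κ α) (κ β)`. -/
noncomputable def cellRate (c : Fin n_s → Fin n_s → ℝ) (b : Fin m → Fin m → ℝ)
    (κ : Fin n_a → Fin m) (S : Fin n_a → Fin n_s) (i j : Fin n_s) (α : Fin n_a) : ℝ :=
  ∑ β ∈ univ.erase α, deltaS j (S β) * (c i j * b (κ α) (κ β))

noncomputable def cellInflow (M N : Fin n_s → Fin m → ℤ) (c : Fin n_s → Fin n_s → ℝ)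
    (b : Fin m → Fin m → ℝ) (κ : Fin n_a → Fin m) (S : Fin n_a → Fin n_s) (i j : Fin n_s)
    (α : Fin n_a) : ℝ :=
  deltaS j (S α) * cellPhi M S κ * cellPhi N (update S α i) κ * cellRate c b κ S i j α

theorem cellRate_update (c : Fin n_s → Fin n_s → ℝ) (b : Fin m → Fin m → ℝ)
    (κ : Fin n_a → Fin m) (S : Fin n_a → Fin n_s) (i j i' : Fin n_s) (α : Fin n_a) :
    cellRate c b κ (update S α i') i j α = cellRate c b κ S i j α :=
  sum_congr rfl fun β hβ => by rw [update_of_ne (ne_of_mem_erase hβ)]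

theorem cellRate_self {c : Fin n_s → Fin n_s → ℝ} (hcdiag : ∀ i, c i i = 0)
    (b : Fin m → Fin m → ℝ) (κ : Fin n_a → Fin m) (S : Fin n_a → Fin n_s) (i : Fin n_s)
    (α : Fin n_a) : cellRate c b κ S i i α = 0 := by
  simp [cellRate, hcdiag]

theorem cellRate_eq_sum_cellOcc_mul (c : Fin n_s → Fin n_s → ℝ) (b : Fin m → Fin m → ℝ)
    (κ : Fin n_a → Fin m) {S : Fin n_a → Fin n_s} (i : Fin n_s) {j : Fin n_s} {α : Fin n_a}
    (hSα : S α ≠ j) : cellRate c b κ S i j α = ∑ l, cellOcc S κ j l * (c i j * b (κ α) l) := by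
  rw [cellRate, sum_erase _ (by simp [deltaS, hSα])]
  simp only [deltaS, ite_mul, one_mul, zero_mul]
  exact sum_ite_eq_sum_cellOcc_mul S κ j fun l => c i j * b (κ α) l

theorem sum_cellInflow_eq_sum_cellPhi_mul (M N : Fin n_s → Fin m → ℤ)
    (c : Fin n_s → Fin n_s → ℝ) (b : Fin m → Fin m → ℝ) (κ : Fin n_a → Fin m)
    (i j : Fin n_s) (α : Fin n_a) :
    ∑ S, cellInflow M N c b κ S i j α =
      ∑ S, cellPhi N S κ *
        if S α = i then cellPhi M (update S α j) κ * cellRate c b κ S i j α else 0 := by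
  have := sum_ite_apply_eq_sum_ite_update α i j fun S S' =>
    cellPhi M S κ * cellPhi N S' κ * cellRate c b κ S i j α
  simp only [cellRate_update] at this
  convert this using 2 with S _ S _
  · simp only [cellInflow, deltaS]
    split_ifs <;> ring
  · split_ifs <;> ring

theorem cellInflow_eq_zero {M N : Fin n_s → Fin m → ℤ}
    (hM : ¬∃ i j k, i ≠ j ∧ M = N + Emat j k - Emat i k) {c : Fin n_s → Fin n_s → ℝ}
    (hcdiag : ∀ i, c i i = 0) (b : Fin m → Fin m → ℝ) (κ : Fin n_a → Fin m)
    (S : Fin n_a → Fin n_s) (i j : Fin n_s) (α : Fin n_a) : cellInflow M N c b κ S i j α = 0 := by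
  unfold cellInflow
  obtain rfl | hij := eq_or_ne i j
  · rw [cellRate_self hcdiag, mul_zero]
  by_cases hSα : S α = j
  swap
  · simp [deltaS, hSα]
  by_cases hMS : cellOcc S κ = M
  swap
  · simp [cellPhi, hMS]
  rw [cellPhi_update hMS hSα]
  split_ifs with hN
  · exact (hM ⟨i, j, κ α, hij, by rw [hN]; abel⟩).elim
  · rw [mul_zero, zero_mul]

section Transition

variable {M N : Fin n_s → Fin m → ℤ} {i₀ j₀ : Fin n_s} {k₀ : Fin m}
  {c : Fin n_s → Fin n_s → ℝ}

theorem cellPhi_update_eq_ite (hij₀ : i₀ ≠ j₀) (hM : M = N + Emat j₀ k₀ - Emat i₀ k₀)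
    {S : Fin n_a → Fin n_s} {κ : Fin n_a → Fin m} (hN : cellOcc S κ = N) {i j : Fin n_s}
    (hij : i ≠ j) {α : Fin n_a} (hSα : S α = i) :
    cellPhi M (update S α j) κ = if i = i₀ ∧ j = j₀ ∧ κ α = k₀ then 1 else 0 := by
  rw [cellPhi_update hN hSα, hM]
  refine if_congr ⟨fun h => ?_, ?_⟩ rfl rfl
  · obtain ⟨rfl, rfl, rfl⟩ := eq_of_Emat_sub_Emat_eq hij₀ (by simpa [add_sub_assoc] using h)
    exact ⟨rfl, rfl, rfl⟩
  · rintro ⟨rfl, rfl, rfl⟩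
    rfl

theorem cellPhi_update_mul_cellRate_eq_ite (hij₀ : i₀ ≠ j₀)
    (hM : M = N + Emat j₀ k₀ - Emat i₀ k₀) (hcdiag : ∀ i, c i i = 0) (b : Fin m → Fin m → ℝ)
    {S : Fin n_a → Fin n_s} {κ : Fin n_a → Fin m} (hN : cellOcc S κ = N) (i j : Fin n_s)
    (α : Fin n_a) :
    (if S α = i then cellPhi M (update S α j) κ * cellRate c b κ S i j α else 0) =
      if i = i₀ ∧ j = j₀ ∧ κ α = k₀ ∧ S α = i₀ then cellRate c b κ S i₀ j₀ α else 0 := by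
  by_cases hSα : S α = i
  swap
  · rw [if_neg hSα, if_neg (by rintro ⟨rfl, -, -, h⟩; exact hSα h)]
  obtain rfl | hij := eq_or_ne i j
  · rw [cellRate_self hcdiag, mul_zero, ite_self,
      if_neg fun h => hij₀ (h.1.symm.trans h.2.1)]
  rw [if_pos hSα, cellPhi_update_eq_ite hij₀ hM hN hij hSα]
  by_cases h : i = i₀ ∧ j = j₀ ∧ κ α = k₀
  · obtain ⟨rfl, rfl, hk⟩ := h
    simp [hk, hSα]
  · rw [if_neg h, if_neg (fun h' => h ⟨h'.1, h'.2.1, h'.2.2.1⟩), zero_mul]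

theorem sum_cellPhi_update_mul_cellRate (hij₀ : i₀ ≠ j₀)
    (hM : M = N + Emat j₀ k₀ - Emat i₀ k₀) (hcdiag : ∀ i, c i i = 0) (b : Fin m → Fin m → ℝ)
    {S : Fin n_a → Fin n_s} {κ : Fin n_a → Fin m} (hN : cellOcc S κ = N) :
    ∑ i, ∑ j, ∑ α, (if S α = i then cellPhi M (update S α j) κ * cellRate c b κ S i j α else 0) =
      ∑ l, c i₀ j₀ * b k₀ l * N i₀ k₀ * N j₀ l := by
  simp only [cellPhi_update_mul_cellRate_eq_ite hij₀ hM hcdiag b hN, ite_and, sum_ite_irrel,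
    sum_const_zero, sum_ite_eq', mem_univ, if_true]
  have hrate : ∀ α, (if κ α = k₀ then if S α = i₀ then cellRate c b κ S i₀ j₀ α else 0 else 0) =
      if κ α = k₀ ∧ S α = i₀ then ∑ l, c i₀ j₀ * b k₀ l * N j₀ l else 0 := by
    intro α
    split_ifs with hk hS hS' hS'
    · rw [cellRate_eq_sum_cellOcc_mul c b κ i₀ (hS ▸ hij₀), hN, hk]
      exact sum_congr rfl fun l _ => by ring
    all_goals simp_all
  rw [sum_congr rfl fun α _ => hrate α, sum_ite_eq_cellOcc_mul, hN, mul_sum]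
  exact sum_congr rfl fun l _ => by ring

theorem sum_cellInflow_of_transition (hij₀ : i₀ ≠ j₀) (hM : M = N + Emat j₀ k₀ - Emat i₀ k₀)
    (hcdiag : ∀ i, c i i = 0) (b : Fin m → Fin m → ℝ) (κ : Fin n_a → Fin m) :
    ∑ S, ∑ i, ∑ j, ∑ α, cellInflow M N c b κ S i j α =
      (∑ l, c i₀ j₀ * b k₀ l * N i₀ k₀ * N j₀ l) * ∑ S, cellPhi N S κ := by
  have hswap : ∀ F : (Fin n_a → Fin n_s) → Fin n_s → Fin n_s → Fin n_a → ℝ,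
      ∑ S, ∑ i, ∑ j, ∑ α, F S i j α = ∑ i, ∑ j, ∑ α, ∑ S, F S i j α := fun F => by
    rw [sum_comm]
    refine sum_congr rfl fun i _ => ?_
    rw [sum_comm]
    exact sum_congr rfl fun j _ => sum_comm
  calc _ = ∑ i, ∑ j, ∑ α, ∑ S, cellPhi N S κ *
        if S α = i then cellPhi M (update S α j) κ * cellRate c b κ S i j α else 0 := by
        rw [hswap]
        simp only [sum_cellInflow_eq_sum_cellPhi_mul]
    _ = ∑ S, cellPhi N S κ * ∑ i, ∑ j, ∑ α,
        if S α = i then cellPhi M (update S α j) κ * cellRate c b κ S i j α else 0 := by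
        simp only [mul_sum]
        rw [hswap]
    _ = ∑ S, cellPhi N S κ * ∑ l, c i₀ j₀ * b k₀ l * N i₀ k₀ * N j₀ l := by
        refine sum_congr rfl fun S _ => ?_
        by_cases hN : cellOcc S κ = N
        · rw [sum_cellPhi_update_mul_cellRate hij₀ hM hcdiag b hN]
        · simp [cellPhi, hN]
    _ = _ := by
        rw [mul_sum]
        exact sum_congr rfl fun S _ => mul_comm _ _

end Transition

end Configurations

section Ansatz

variable {d m n_s n_a : ℕ} {A : Fin m → Set (E d)}

theorem occ_eq_cellOcc (hAdisj : Pairwise (Disjoint on A)) {X : Fin n_a → E d}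
    {κ : Fin n_a → Fin m} (hX : X ∈ cell A κ) (S : Fin n_a → Fin n_s) (i : Fin n_s)
    (k : Fin m) : (occ A X S i k : ℤ) = cellOcc S κ i k := by
  have hmem : ∀ α, X α ∈ A k ↔ κ α = k := fun α =>
    ⟨fun h => by_contra fun hne => Set.disjoint_left.1 (hAdisj hne) (hX α trivial) h,
      fun h => h ▸ hX α trivial⟩
  simp [occ, cellOcc, hmem, ← Set.ncard_coe_finset]

theorem Phi_eq_cellPhi (hAdisj : Pairwise (Disjoint on A)) {X : Fin n_a → E d}
    {κ : Fin n_a → Fin m} (hX : X ∈ cell A κ) (P : Fin n_s → Fin m → ℤ)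
    (S : Fin n_a → Fin n_s) : Phi A P X S = cellPhi P S κ := by
  simp only [Phi, cellPhi, occ_eq_cellOcc hAdisj hX, funext_iff]

theorem Phi_mul_G2Second_eqOn_cell (hAdisj : Pairwise (Disjoint on A))
    (c : Fin n_s → Fin n_s → ℝ) (r : ℝ) (M N : Fin n_s → Fin m → ℤ) (S : Fin n_a → Fin n_s)
    (κ : Fin n_a → Fin m) :
    Set.EqOn (fun X => Phi A M X S * G2Second c r (Phi A N) X S)
      (fun X => ∑ i, ∑ j, ∑ α, deltaS j (S α) * cellPhi M S κ * cellPhi N (update S α i) κ *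
        ∑ β ∈ univ.erase α, deltaS j (S β) * (c i j * dr r (X α) (X β))) (cell A κ) := by
  intro X hX
  simp only [G2Second, Phi_eq_cellPhi hAdisj hX, mul_sum, sum_mul]
  exact sum_congr rfl fun i _ => sum_congr rfl fun j _ => sum_congr rfl fun α _ =>
    sum_congr rfl fun β _ => by ring

theorem integrableOn_cell_Phi_mul_G2Second (hAmeas : ∀ k, MeasurableSet (A k))
    (hAdisj : Pairwise (Disjoint on A)) (hAfin : ∀ k, volume (A k) ≠ ⊤)
    (c : Fin n_s → Fin n_s → ℝ) (r : ℝ) (M N : Fin n_s → Fin m → ℤ) (S : Fin n_a → Fin n_s)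
    (κ : Fin n_a → Fin m) :
    IntegrableOn (fun X => Phi A M X S * G2Second c r (Phi A N) X S) (cell A κ) := by
  have hdr := integrable_cell_dr hAfin r κ
  refine IntegrableOn.congr_fun ?_ (Phi_mul_G2Second_eqOn_cell hAdisj c r M N S κ).symm
    (measurableSet_cell hAmeas κ)
  unfold IntegrableOn
  fun_prop

theorem setIntegral_cell_Phi_mul_G2Second (hAmeas : ∀ k, MeasurableSet (A k))
    (hAdisj : Pairwise (Disjoint on A)) (hAfin : ∀ k, volume (A k) ≠ ⊤)
    (c : Fin n_s → Fin n_s → ℝ) (r : ℝ) (M N : Fin n_s → Fin m → ℤ) (S : Fin n_a → Fin n_s)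
    (κ : Fin n_a → Fin m) :
    ∫ X in cell A κ, Phi A M X S * G2Second c r (Phi A N) X S =
      cellVolume A κ * ∑ i, ∑ j, ∑ α, cellInflow M N c (bOf A r) κ S i j α := by
  have hdr := integrable_cell_dr hAfin r κ
  rw [setIntegral_congr_fun (measurableSet_cell hAmeas κ)
    (Phi_mul_G2Second_eqOn_cell hAdisj c r M N S κ)]
  simp (disch := intros; fun_prop) only [integral_finsetSum, integral_const_mul]
  simp only [cellInflow, cellRate, mul_sum]
  refine sum_congr rfl fun i _ => sum_congr rfl fun j _ => sum_congr rfl fun α _ =>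
    sum_congr rfl fun β hβ => ?_
  rw [setIntegral_cell_dr hAfin r κ (ne_of_mem_erase hβ).symm]
  ring

theorem Phi_mul_self_eqOn_cell (hAdisj : Pairwise (Disjoint on A)) (N : Fin n_s → Fin m → ℤ)
    (S : Fin n_a → Fin n_s) (κ : Fin n_a → Fin m) :
    Set.EqOn (fun X => Phi A N X S * Phi A N X S) (fun _ => cellPhi N S κ) (cell A κ) := by
  intro X hX
  simp only [Phi_eq_cellPhi hAdisj hX, cellPhi]
  split_ifs <;> ring

theorem integrableOn_cell_Phi_mul_self (hAmeas : ∀ k, MeasurableSet (A k))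
    (hAdisj : Pairwise (Disjoint on A)) (hAfin : ∀ k, volume (A k) ≠ ⊤)
    (N : Fin n_s → Fin m → ℤ) (S : Fin n_a → Fin n_s) (κ : Fin n_a → Fin m) :
    IntegrableOn (fun X => Phi A N X S * Phi A N X S) (cell A κ) :=
  (integrableOn_const (volume_cell_ne_top hAfin κ)).congr_fun
    (Phi_mul_self_eqOn_cell hAdisj N S κ).symm (measurableSet_cell hAmeas κ)

theorem setIntegral_cell_Phi_mul_self (hAmeas : ∀ k, MeasurableSet (A k))
    (hAdisj : Pairwise (Disjoint on A)) (N : Fin n_s → Fin m → ℤ) (S : Fin n_a → Fin n_s)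
    (κ : Fin n_a → Fin m) :
    ∫ X in cell A κ, Phi A N X S * Phi A N X S = cellVolume A κ * cellPhi N S κ := by
  rw [setIntegral_congr_fun (measurableSet_cell hAmeas κ) (Phi_mul_self_eqOn_cell hAdisj N S κ),
    setIntegral_const, measureReal_cell, smul_eq_mul]

theorem ip_eq_sum_cell {Xdom : Set (E d)} (hAmeas : ∀ k, MeasurableSet (A k))
    (hAdisj : Pairwise (Disjoint on A)) (hAcover : (⋃ k, A k) = Xdom) {f g : FS d n_s n_a}
    {F : (Fin n_a → Fin n_s) → (Fin n_a → Fin m) → ℝ}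
    (hint : ∀ S κ, IntegrableOn (fun X => f X S * g X S) (cell A κ))
    (hF : ∀ S κ, ∫ X in cell A κ, f X S * g X S = F S κ) :
    ip Xdom f g = (((volume Xdom).toReal * n_s) ^ n_a)⁻¹ * ∑ κ, ∑ S, F S κ := by
  simp only [ip, setIntegral_posSet_eq_sum_cell hAmeas hAdisj hAcover (hint _), hF]
  rw [sum_comm]

end Ansatz

theorem statement14_general (d m n_s n_a : ℕ)
    (Xdom : Set (E d)) (hXcomp : IsCompact Xdom)
    (A : Fin m → Set (E d)) (hAmeas : ∀ k, MeasurableSet (A k))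
    (hAdisj : Pairwise (Disjoint on A))
    (hAcover : (⋃ k, A k) = Xdom)
    (r : ℝ) (c : Fin n_s → Fin n_s → ℝ)
    (hcdiag : ∀ i, c i i = 0)
    (M N : Fin n_s → Fin m → ℤ) :
    (∀ (i j : Fin n_s) (k : Fin m), i ≠ j → M = N + Emat j k - Emat i k →
      ip Xdom (Phi (n_a := n_a) A M) (G2Second c r (Phi A N))
        = (∑ l : Fin m, c i j * bOf A r k l * (N i k : ℝ) * (N j l : ℝ)) *
            ip Xdom (Phi (n_a := n_a) A N) (Phi A N)) ∧
    ((¬∃ (i j : Fin n_s) (k : Fin m), i ≠ j ∧ M = N + Emat j k - Emat i k) →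
      ip Xdom (Phi (n_a := n_a) A M) (G2Second c r (Phi A N)) = 0) := by
  have hAfin : ∀ k, volume (A k) ≠ ⊤ := fun k =>
    ((measure_mono (hAcover ▸ Set.subset_iUnion A k)).trans_lt hXcomp.measure_lt_top).ne
  have hinflow := ip_eq_sum_cell (n_a := n_a) hAmeas hAdisj hAcover
    (integrableOn_cell_Phi_mul_G2Second hAmeas hAdisj hAfin c r M N)
    (setIntegral_cell_Phi_mul_G2Second hAmeas hAdisj hAfin c r M N)
  have hself := ip_eq_sum_cell (n_a := n_a) hAmeas hAdisj hAcover
    (integrableOn_cell_Phi_mul_self hAmeas hAdisj hAfin N)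
    (setIntegral_cell_Phi_mul_self hAmeas hAdisj N)
  simp only [← mul_sum] at hinflow hself
  refine ⟨fun i j k hij hM => ?_, fun hM => ?_⟩
  · rw [hinflow, hself]
    simp only [sum_cellInflow_of_transition hij hM hcdiag]
    simp only [mul_sum]
    exact sum_congr rfl fun κ _ => sum_congr rfl fun S _ => by ring
  · simp [hinflow, cellInflow_eq_zero hM hcdiag]

/-- for the inflow part `G₂` of the second-order adoption generator,
`⟨Φ_M, G₂ Φ_N⟩ = ∑_l c_{ij} b_{kl} N_i^{(k)} N_j^{(l)} ⟨Φ_N, Φ_N⟩` if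
`M = N + E_j^{(k)} − E_i^{(k)}` for some statuses `i ≠ j` and subset index `k`, and
`⟨Φ_M, G₂ Φ_N⟩ = 0` otherwise. -/
theorem statement14 (d m n_s n_a : ℕ) (hns : 1 ≤ n_s) (hna : 1 ≤ n_a)
    (Xdom : Set (E d)) (hXcomp : IsCompact Xdom) (hXpos : 0 < volume Xdom)
    (A : Fin m → Set (E d)) (hAmeas : ∀ k, MeasurableSet (A k))
    (hAdisj : Pairwise (Disjoint on A)) (hApos : ∀ k, 0 < volume (A k))
    (hAcover : (⋃ k, A k) = Xdom)
    (r : ℝ) (hr : 0 < r) (c : Fin n_s → Fin n_s → ℝ)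
    (hc : ∀ i j, 0 ≤ c i j) (hcdiag : ∀ i, c i i = 0)
    (M N : Fin n_s → Fin m → ℤ)
    (hM : M ∈ Mset n_s m n_a) (hN : N ∈ Mset n_s m n_a) :
    (∀ (i j : Fin n_s) (k : Fin m), i ≠ j → M = N + Emat j k - Emat i k →
      ip Xdom (Phi (n_a := n_a) A M) (G2Second c r (Phi A N))
        = (∑ l : Fin m, c i j * bOf A r k l * (N i k : ℝ) * (N j l : ℝ)) *
            ip Xdom (Phi (n_a := n_a) A N) (Phi A N)) ∧
    ((¬∃ (i j : Fin n_s) (k : Fin m), i ≠ j ∧ M = N + Emat j k - Emat i k) →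
      ip Xdom (Phi (n_a := n_a) A M) (G2Second c r (Phi A N)) = 0) :=
  statement14_general d m n_s n_a Xdom hXcomp A hAmeas hAdisj hAcover r c hcdiag M N

end ABMFormal
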